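/- Pollard's virial theorem, converse direction: let q(t) be a solution of Newton's N-body equations defined for all t ∈ ℝ, and suppose the time averages ⟨K⟩ = lim_{T→∞} (1/(2T))∫_{−T}^{T} K(t) dt and ⟨U⟩ = lim_{T→∞} (1/(2T))∫_{−T}^{T} U(q(t)) dt both exist as finite limits and satisfy the virial equation 2⟨K⟩ − ⟨U⟩ = 0. Then I(t)/t² → 0 as t → +∞ and as t → −∞. -/

import Mathlib

open Finset Filter MeasureTheory
open scoped RealInnerProductSpace

noncomputable section

/-- Configuration space of `N` bodies in `ℝ³`. -/
abbrev Config (N : ℕ) := Fin N → EuclideanSpace ℝ (Fin 3)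

/-- A configuration is collision-free if all bodies occupy distinct positions. -/
def CollisionFree {N : ℕ} (q : Config N) : Prop :=
  ∀ a b : Fin N, a ≠ b → q a ≠ q b

/-- The Newtonian potential `U(q) = G ∑_{a<b} m_a m_b / |q_a - q_b|`. -/
def potU {N : ℕ} (G : ℝ) (m : Fin N → ℝ) (q : Config N) : ℝ :=
  G * ∑ a : Fin N, ∑ b : Fin N, if a < b then m a * m b / ‖q a - q b‖ else 0

/-- Kinetic energy `K = (1/2) ∑_a m_a |v_a|²`. -/
def kinE {N : ℕ} (m : Fin N → ℝ) (v : Config N) : ℝ :=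
  (1 / 2) * ∑ a : Fin N, m a * ‖v a‖ ^ 2

/-- Moment of inertia `I = ∑_a m_a |q_a|²`. -/
def momI {N : ℕ} (m : Fin N → ℝ) (q : Config N) : ℝ :=
  ∑ a : Fin N, m a * ‖q a‖ ^ 2

/-- `q, v : ℝ → Config N` is a solution of Newton's N-body equations on `J`:
at each time in `J` the configuration is collision-free, `v` is the derivative
of `q`, and the acceleration satisfies
`m_a q̈_a = G ∑_{b ≠ a} m_a m_b (q_b - q_a)/|q_b - q_a|³`. -/
def IsSolutionOn {N : ℕ} (G : ℝ) (m : Fin N → ℝ) (J : Set ℝ)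
    (q v : ℝ → Config N) : Prop :=
  ∀ t ∈ J,
    CollisionFree (q t) ∧
    (∀ a, HasDerivAt (fun s => q s a) (v t a) t) ∧
    (∀ a, ∃ acc : EuclideanSpace ℝ (Fin 3),
      HasDerivAt (fun s => v s a) acc t ∧
      m a • acc = ∑ b ∈ univ.filter (fun b => b ≠ a),
        (G * m a * m b / ‖q t b - q t a‖ ^ 3) • (q t b - q t a))

/-!
Differentiating the moment of inertia twice along the motion gives the Lagrange–Jacobi identity
`Ï = 4K - 2U`; the force contributes `-U` by Euler's relation for the potential, which is
homogeneous of degree `-1`. Hence `g(T) = I(T) + I(-T)` has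
`g'(T) = İ(T) - İ(-T) = ∫_{-T}^{T} (4K - 2U)`, which is `o(T)` by the virial equation. The mean
value theorem turns this into `g(T) = o(T²)`, and `0 ≤ I(±T) ≤ g(T)` gives both limits.
-/

open Asymptotics Topology

theorem isLittleO_sq_of_hasDerivAt {f f' : ℝ → ℝ} (hf : ∀ t, HasDerivAt f (f' t) t)
    (hf' : f' =o[atTop] id) : f =o[atTop] fun t => t ^ 2 := by
  refine IsLittleO.of_bound fun c hc => ?_
  obtain ⟨T₀, hT₀⟩ :=
    eventually_atTop.1 ((hf'.bound (half_pos hc)).and (eventually_ge_atTop 0))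
  have hT₀_nonneg : 0 ≤ T₀ := (hT₀ T₀ le_rfl).2
  have hmvt : ∀ T ≥ T₀, ‖f T - f T₀‖ ≤ c / 2 * T * (T - T₀) := fun T hT =>
    norm_image_sub_le_of_norm_deriv_le_segment' (fun t _ => (hf t).hasDerivWithinAt)
      (fun t ht => by
        have := (hT₀ t ht.1).1
        rw [id, Real.norm_of_nonneg (hT₀ t ht.1).2] at this
        exact this.trans (by gcongr; exact ht.2.le))
      T ⟨hT, le_rfl⟩
  have hconst : ∀ᶠ T in atTop, ‖f T₀‖ ≤ c / 2 * T ^ 2 :=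
    ((tendsto_pow_atTop two_ne_zero).const_mul_atTop (half_pos hc)).eventually_ge_atTop _
  filter_upwards [eventually_ge_atTop T₀, hconst] with T hT hT'
  rw [Real.norm_of_nonneg (sq_nonneg T)]
  calc ‖f T‖ ≤ ‖f T - f T₀‖ + ‖f T₀‖ := norm_le_norm_sub_add _ _
    _ ≤ c / 2 * T * (T - T₀) + c / 2 * T ^ 2 := add_le_add (hmvt T hT) hT'
    _ ≤ c * T ^ 2 := by nlinarith [mul_nonneg (mul_nonneg hc.le (hT₀_nonneg.trans hT)) hT₀_nonneg]

theorem tendsto_div_sq_atTop_and_atBot {f f' : ℝ → ℝ} (hf : ∀ t, HasDerivAt f (f' t) t)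
    (hf_nonneg : ∀ t, 0 ≤ f t) (hf' : Tendsto (fun T => (f' T - f' (-T)) / T) atTop (𝓝 0)) :
    Tendsto (fun t => f t / t ^ 2) atTop (𝓝 0) ∧ Tendsto (fun t => f t / t ^ 2) atBot (𝓝 0) := by
  set g := fun t => f t + f (-t)
  have hg : ∀ t, HasDerivAt g (f' t - f' (-t)) t := fun t =>
    ((hf t).add ((hf (-t)).comp t (hasDerivAt_neg t))).congr_deriv (by ring)
  have hg' : (fun T => f' T - f' (-T)) =o[atTop] id :=
    (isLittleO_iff_tendsto' (by
      filter_upwards [eventually_ne_atTop 0] with T hT h using absurd h hT)).2 hf'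
  have hg_top : Tendsto (fun t => g t / t ^ 2) atTop (𝓝 0) :=
    (isLittleO_sq_of_hasDerivAt hg hg').tendsto_div_nhds_zero
  have hg_bot : Tendsto (fun t => g t / t ^ 2) atBot (𝓝 0) :=
    (hg_top.comp tendsto_neg_atBot_atTop).congr fun t => by simp [g, add_comm]
  have hle : ∀ t, f t / t ^ 2 ≤ g t / t ^ 2 := fun t =>
    div_le_div_of_nonneg_right (le_add_of_nonneg_right (hf_nonneg _)) (sq_nonneg t)
  have hnonneg : ∀ t, 0 ≤ f t / t ^ 2 := fun t => div_nonneg (hf_nonneg t) (sq_nonneg t)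
  exact ⟨squeeze_zero hnonneg hle hg_top, squeeze_zero hnonneg hle hg_bot⟩

theorem sum_sum_mul_inner_sub_eq {ι E : Type*} [Fintype ι] [NormedAddCommGroup E]
    [InnerProductSpace ℝ E] {c : ι → ι → ℝ} (hc : ∀ a b, c a b = c b a) (x : ι → E) :
    ∑ a, ∑ b, c a b * ⟪x a, x b - x a⟫ = -(∑ a, ∑ b, c a b * ‖x b - x a‖ ^ 2) / 2 := by
  have hswap : ∑ a, ∑ b, c a b * ⟪x a, x b - x a⟫ = ∑ a, ∑ b, c a b * ⟪x b, x a - x b⟫ := by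
    rw [Finset.sum_comm]; simp only [hc]
  have hpair : ∀ y z : E, ⟪y, z - y⟫ + ⟪z, y - z⟫ = -‖z - y‖ ^ 2 := fun y z => by
    rw [← real_inner_self_eq_norm_sq]
    simp only [inner_sub_left, inner_sub_right, real_inner_comm y z]
    ring
  have hsum : ∑ a, ∑ b, c a b * ⟪x a, x b - x a⟫ + ∑ a, ∑ b, c a b * ⟪x b, x a - x b⟫ =
      -∑ a, ∑ b, c a b * ‖x b - x a‖ ^ 2 := by
    simp only [← Finset.sum_add_distrib, ← mul_add, hpair, ← Finset.sum_neg_distrib, mul_neg]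
  linarith

theorem sum_sum_ite_ne_eq_two_mul {ι : Type*} [Fintype ι] [LinearOrder ι] {g : ι → ι → ℝ}
    (hg : ∀ a b, g a b = g b a) :
    ∑ a, ∑ b, (if a ≠ b then g a b else 0) = 2 * ∑ a, ∑ b, if a < b then g a b else 0 := by
  have hsplit : ∀ a b, (if a ≠ b then g a b else 0) =
      (if a < b then g a b else 0) + if b < a then g b a else 0 := fun a b => by
    rcases lt_trichotomy a b with h | rfl | h
    · simp [h, h.ne, h.not_gt]
    · simp
    · simp [h, h.ne', h.not_gt, hg a b]
  simp only [hsplit, Finset.sum_add_distrib]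
  rw [Finset.sum_comm (f := fun a b => if b < a then g b a else 0)]
  ring

theorem sum_inner_force_eq_neg_potU {N : ℕ} (G : ℝ) (m : Fin N → ℝ) {q : Config N}
    (hq : CollisionFree q) :
    ∑ a, ⟪q a, ∑ b ∈ univ.filter (fun b => b ≠ a),
        (G * m a * m b / ‖q b - q a‖ ^ 3) • (q b - q a)⟫ = -potU G m q := by
  set c : Fin N → Fin N → ℝ := fun a b => if a ≠ b then G * m a * m b / ‖q b - q a‖ ^ 3 else 0
  have hc : ∀ a b, c a b = c b a := fun a b => by
    simp only [c, ne_comm, norm_sub_rev (q a)]; ring_nf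
  have hforce : ∀ a, ⟪q a, ∑ b ∈ univ.filter (fun b => b ≠ a),
      (G * m a * m b / ‖q b - q a‖ ^ 3) • (q b - q a)⟫ = ∑ b, c a b * ⟪q a, q b - q a⟫ := by
    intro a
    rw [inner_sum, Finset.sum_filter]
    refine Finset.sum_congr rfl fun b _ => ?_
    by_cases hab : a = b
    · simp [c, hab]
    · simp [c, hab, Ne.symm hab, real_inner_smul_right]
  have hpot : ∀ a b, c a b * ‖q b - q a‖ ^ 2 =
      if a ≠ b then G * m a * m b / ‖q a - q b‖ else 0 := fun a b => by
    by_cases hab : a = b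
    · simp [c, hab]
    · have : ‖q b - q a‖ ≠ 0 := norm_ne_zero_iff.2 (sub_ne_zero.2 (hq b a (Ne.symm hab)))
      simp only [c, hab, ne_eq, not_false_eq_true, if_true, norm_sub_rev (q a)]
      field_simp
  have hU : potU G m q = ∑ a, ∑ b, if a < b then G * m a * m b / ‖q a - q b‖ else 0 := by
    simp only [potU, Finset.mul_sum, mul_ite, mul_zero, mul_div_assoc, mul_assoc]
  rw [Finset.sum_congr rfl fun a _ => hforce a, sum_sum_mul_inner_sub_eq hc]
  simp only [hpot]
  rw [sum_sum_ite_ne_eq_two_mul fun a b => by rw [norm_sub_rev]; ring, hU]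
  ring

def momIDot {N : ℕ} (m : Fin N → ℝ) (q v : Config N) : ℝ :=
  2 * ∑ a, m a * ⟪q a, v a⟫

theorem momI_nonneg {N : ℕ} {m : Fin N → ℝ} (hm : ∀ a, 0 ≤ m a) (q : Config N) :
    0 ≤ momI m q :=
  Finset.sum_nonneg fun a _ => mul_nonneg (hm a) (sq_nonneg _)

theorem hasDerivAt_momI {N : ℕ} (m : Fin N → ℝ) {q : ℝ → Config N} {w : Config N} {t : ℝ}
    (hq : ∀ a, HasDerivAt (fun s => q s a) (w a) t) :
    HasDerivAt (fun s => momI m (q s)) (momIDot m (q t) w) t := by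
  simp only [momI, ← real_inner_self_eq_norm_sq]
  refine (HasDerivAt.fun_sum fun a _ => ((hq a).inner ℝ (hq a)).const_mul (m a)).congr_deriv ?_
  rw [momIDot, Finset.mul_sum]
  exact Finset.sum_congr rfl fun a _ => by rw [real_inner_comm (w a)]; ring

theorem IsSolutionOn.hasDerivAt_momIDot {N : ℕ} {G : ℝ} {m : Fin N → ℝ} {J : Set ℝ}
    {q v : ℝ → Config N} (hsol : IsSolutionOn G m J q v) {t : ℝ} (ht : t ∈ J) :
    HasDerivAt (fun s => momIDot m (q s) (v s)) (4 * kinE m (v t) - 2 * potU G m (q t)) t := by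
  obtain ⟨hcf, hq, hv⟩ := hsol t ht
  choose acc hacc hnewton using hv
  refine ((HasDerivAt.fun_sum fun a _ =>
    ((hq a).inner ℝ (hacc a)).const_mul (m a)).const_mul 2).congr_deriv ?_
  have hterm : ∀ a, m a * (⟪q t a, acc a⟫ + ⟪v t a, v t a⟫) =
      ⟪q t a, m a • acc a⟫ + m a * ‖v t a‖ ^ 2 := fun a => by
    rw [real_inner_smul_right, real_inner_self_eq_norm_sq]; ring
  simp only [hterm, Finset.sum_add_distrib, hnewton, sum_inner_force_eq_neg_potU G m hcf, kinE]
  ring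

theorem IsSolutionOn.continuous_kinE {N : ℕ} {G : ℝ} {m : Fin N → ℝ} {q v : ℝ → Config N}
    (hsol : IsSolutionOn G m Set.univ q v) : Continuous fun t => kinE m (v t) := by
  have hv : ∀ a, Continuous fun t => v t a := fun a => continuous_iff_continuousAt.2 fun t =>
    (((hsol t trivial).2.2 a).choose_spec.1).continuousAt
  unfold kinE
  fun_prop

theorem IsSolutionOn.continuous_potU {N : ℕ} {G : ℝ} {m : Fin N → ℝ} {q v : ℝ → Config N}
    (hsol : IsSolutionOn G m Set.univ q v) : Continuous fun t => potU G m (q t) := by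
  have hq : ∀ a, Continuous fun t => q t a := fun a => continuous_iff_continuousAt.2 fun t =>
    ((hsol t trivial).2.1 a).continuousAt
  unfold potU
  refine continuous_const.mul (continuous_finsetSum _ fun a _ =>
    continuous_finsetSum _ fun b _ => ?_)
  split_ifs with hab
  · exact continuous_const.div ((hq a).sub (hq b)).norm fun t =>
      norm_ne_zero_iff.2 (sub_ne_zero.2 ((hsol t trivial).1 a b hab.ne))
  · exact continuous_const

theorem IsSolutionOn.momIDot_sub_momIDot {N : ℕ} {G : ℝ} {m : Fin N → ℝ} {q v : ℝ → Config N}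
    (hsol : IsSolutionOn G m Set.univ q v) (S T : ℝ) :
    momIDot m (q T) (v T) - momIDot m (q S) (v S) =
      4 * (∫ t in S..T, kinE m (v t)) - 2 * ∫ t in S..T, potU G m (q t) := by
  have hK := hsol.continuous_kinE.intervalIntegrable (μ := volume) S T
  have hU := hsol.continuous_potU.intervalIntegrable (μ := volume) S T
  rw [← intervalIntegral.integral_const_mul, ← intervalIntegral.integral_const_mul,
    ← intervalIntegral.integral_sub (hK.const_mul 4) (hU.const_mul 2)]
  exact (intervalIntegral.integral_eq_sub_of_hasDerivAt
    (fun t _ => hsol.hasDerivAt_momIDot trivial) ((hK.const_mul 4).sub (hU.const_mul 2))).symm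

theorem pollard_virial_converse_general
    (N : ℕ) (G : ℝ)
    (m : Fin N → ℝ) (hm : ∀ a, 0 < m a)
    (q v : ℝ → Config N)
    (hsol : IsSolutionOn G m Set.univ q v)
    (Kavg Uavg : ℝ)
    (hK : Tendsto (fun T : ℝ => (1 / (2 * T)) * ∫ t in (-T)..T, kinE m (v t))
      atTop (nhds Kavg))
    (hU : Tendsto (fun T : ℝ => (1 / (2 * T)) * ∫ t in (-T)..T, potU G m (q t))
      atTop (nhds Uavg))
    (hvir : 2 * Kavg - Uavg = 0) :
    Tendsto (fun t : ℝ => momI m (q t) / t ^ 2) atTop (nhds 0) ∧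
    Tendsto (fun t : ℝ => momI m (q t) / t ^ 2) atBot (nhds 0) := by
  refine tendsto_div_sq_atTop_and_atBot (fun t => hasDerivAt_momI m (hsol t trivial).2.1)
    (fun t => momI_nonneg (fun a => (hm a).le) (q t)) ?_
  have hlim := (hK.const_mul 8).sub (hU.const_mul 4)
  rw [show 8 * Kavg - 4 * Uavg = 0 by linarith] at hlim
  refine hlim.congr' ?_
  filter_upwards [eventually_ne_atTop 0] with T hT
  rw [hsol.momIDot_sub_momIDot (-T) T]
  field_simp
  ring

/-- Pollard's virial theorem, converse direction: if the time
averages `⟨K⟩` and `⟨U⟩` of a solution defined for all time exist as finite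
limits and satisfy the virial equation `2⟨K⟩ - ⟨U⟩ = 0`, then `I(t) = o(t²)` as
`t → ±∞`. -/
theorem pollard_virial_converse
    (N : ℕ) (hN : 2 ≤ N) (G : ℝ) (hG : 0 < G)
    (m : Fin N → ℝ) (hm : ∀ a, 0 < m a)
    (q v : ℝ → Config N)
    (hsol : IsSolutionOn G m Set.univ q v)
    (Kavg Uavg : ℝ)
    (hK : Tendsto (fun T : ℝ => (1 / (2 * T)) * ∫ t in (-T)..T, kinE m (v t))
      atTop (nhds Kavg))
    (hU : Tendsto (fun T : ℝ => (1 / (2 * T)) * ∫ t in (-T)..T, potU G m (q t))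
      atTop (nhds Uavg))
    (hvir : 2 * Kavg - Uavg = 0) :
    Tendsto (fun t : ℝ => momI m (q t) / t ^ 2) atTop (nhds 0) ∧
    Tendsto (fun t : ℝ => momI m (q t) / t ^ 2) atBot (nhds 0) :=
  pollard_virial_converse_general N G m hm q v hsol Kavg Uavg hK hU hvir
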